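/- Let (A,B) be a stage 3 game (satisfying the input assumptions of the type-two single column simulation) and let (A′,B′) be produced by the type-two single column simulation. Then every entry of A′ lies in {0,1}, and every row and every column of A′ contains at most three entries equal to 1. -/

import Mathlib

open Finset
open scoped Classical

/-- `(x, y)` is an `ε`-well-supported Nash equilibrium of the bimatrix game with
`nr` rows, `nc` columns and payoff matrices `A` (row player) and `B` (column player). -/
def IsWSNE (nr nc : ℕ) (A B : ℕ → ℕ → ℝ) (x y : ℕ → ℝ) (ε : ℝ) : Prop :=
  (∀ i, 0 ≤ x i) ∧ (∀ i, nr ≤ i → x i = 0) ∧ (∑ i ∈ range nr, x i = 1) ∧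
  (∀ j, 0 ≤ y j) ∧ (∀ j, nc ≤ j → y j = 0) ∧ (∑ j ∈ range nc, y j = 1) ∧
  (∀ i < nr, 0 < x i → ∀ i' < nr,
    ∑ j ∈ range nc, A i j * y j ≥ ∑ j ∈ range nc, A i' j * y j - ε) ∧
  (∀ j < nc, 0 < y j → ∀ j' < nc,
    ∑ i ∈ range nr, x i * B i j ≥ ∑ i ∈ range nr, x i * B i j' - ε)

/-- The column requirement of a stage 3 game: at most four non-zero entries, all in
`{1,2}`, with at most one `2`. -/
def Stage3Col (nr : ℕ) (col : ℕ → ℝ) : Prop :=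
  (∀ i < nr, col i ∈ ({0, 1, 2} : Set ℝ)) ∧
  ((range nr).filter fun i => col i ≠ 0).card ≤ 4 ∧
  ((range nr).filter fun i => col i = 2).card ≤ 1

/-- The row requirement of a stage 3 game: either (i) at most three entries `1`, or
(ii) a single `2` with at most one `1` (all remaining entries are `0`). -/
def Stage3Row (nc : ℕ) (row : ℕ → ℝ) : Prop :=
  ((∀ j < nc, row j = 0 ∨ row j = 1) ∧
    ((range nc).filter fun j => row j = 1).card ≤ 3) ∨
  ((((range nc).filter fun j => row j = 2).card = 1) ∧
    ((range nc).filter fun j => row j = 1).card ≤ 1 ∧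
    ∀ j < nc, row j ∈ ({0, 1, 2} : Set ℝ))

/-- `(A, B)` (with `nr` rows and `nc` columns) is a stage 3 game. -/
def Stage3Game (nr nc : ℕ) (A B : ℕ → ℕ → ℝ) : Prop :=
  (∀ j < nc, Stage3Col nr (fun i => A i j)) ∧
  (∀ i < nr, Stage3Row nc (fun j => A i j)) ∧
  (∀ i < nr, Stage3Col nc (fun j => B i j)) ∧
  (∀ j < nc, Stage3Row nr (fun i => B i j))

/-- Input assumptions of the type-two single column simulation: `(A, B)` is a
stage 3 game with at most `n` rows and columns, entries in `[0,2]`, every row and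
column with an entry `≥ 1`, whose columns containing a `2` or exactly four `1`s are
exactly the columns `j < k`, while every column `j ≥ k` contains at most three
`1`s and no `2`. -/
def Scs2Input (n nr nc k : ℕ) (A B : ℕ → ℕ → ℝ) : Prop :=
  nr ≤ n ∧ nc ≤ n ∧ k ≤ nc ∧
  Stage3Game nr nc A B ∧
  (∀ i < nr, ∀ j < nc, 0 ≤ A i j ∧ A i j ≤ 2) ∧
  (∀ i < nr, ∀ j < nc, 0 ≤ B i j ∧ B i j ≤ 2) ∧
  (∀ i < nr, ∃ j < nc, 1 ≤ A i j) ∧ (∀ j < nc, ∃ i < nr, 1 ≤ A i j) ∧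
  (∀ i < nr, ∃ j < nc, 1 ≤ B i j) ∧ (∀ j < nc, ∃ i < nr, 1 ≤ B i j) ∧
  (∀ j < k, ((range nr).filter fun i => A i j = 2).card = 1 ∨
            ((range nr).filter fun i => A i j = 1).card = 4) ∧
  (∀ j, k ≤ j → j < nc →
    (∀ i < nr, A i j ≠ 2) ∧ ((range nr).filter fun i => A i j = 1).card ≤ 3)

/-- The number of rows `r' < r` whose entry in column `j` of `A` equals `1`
(the rank of a `1`-entry of that column, used to define `encode`). -/
noncomputable def oneRank (A : ℕ → ℕ → ℝ) (j r : ℕ) : ℕ :=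
  ((range r).filter fun r' => A r' j = 1).card

/-- The row player's payoff matrix `A'` of the type-two single column simulation.
It has `3k + nr` rows and `3k + nc` columns.  For `j < k` the block
`(rbʲ, cb₁ʲ) = ({3j,3j+1,3j+2}, {4j,4j+1,4j+2})` equals the identity `S`, the block
`(rbʲ, cb₂ʲ) = ({3j,3j+1,3j+2}, {4j+3})` is all ones, and the block `(rb_e, cb₁ʲ)`
equals `encode(A_j)`: the entry `2` of `A_j` (if present) becomes `1`s in the
second and third columns of its row, the first two `1`s of `A_j` are placed in the
first column, a third `1` in the second column, a fourth `1` in the third column.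
Columns `c ≥ 4k` restricted to `rb_e` equal columns `A_k, …, A_{nc-1}`; all other
entries are `0`. -/
noncomputable def scs2A (k : ℕ) (A : ℕ → ℕ → ℝ) : ℕ → ℕ → ℝ := fun r c =>
  if r < 3*k then
    (if c = 4*(r/3) + r % 3 ∨ c = 4*(r/3) + 3 then 1 else 0)
  else
    if c < 4*k then
      (if c % 4 = 0 then
        (if A (r - 3*k) (c/4) = 1 ∧ oneRank A (c/4) (r - 3*k) < 2 then 1 else 0)
       else if c % 4 = 1 then
        (if A (r - 3*k) (c/4) = 2 ∨ (A (r - 3*k) (c/4) = 1 ∧ oneRank A (c/4) (r - 3*k) = 2)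
         then 1 else 0)
       else if c % 4 = 2 then
        (if A (r - 3*k) (c/4) = 2 ∨ (A (r - 3*k) (c/4) = 1 ∧ oneRank A (c/4) (r - 3*k) = 3)
         then 1 else 0)
       else 0)
    else A (r - 3*k) (c - 3*k)

/-- The column player's payoff matrix `B'` of the type-two single column
simulation: for `j < k` the block `(rbʲ, cb₁ʲ)` equals `T = [[0,1,0],[0,0,1],[1,0,0]]`
and the block `(rb_e, cb₂ʲ)` equals column `B_j`; columns `c ≥ 4k` restricted to
`rb_e` equal columns `B_k, …, B_{nc-1}`; all other entries are `0`. -/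
noncomputable def scs2B (k : ℕ) (B : ℕ → ℕ → ℝ) : ℕ → ℕ → ℝ := fun r c =>
  if r < 3*k then (if c = 4*(r/3) + ((r % 3 + 1) % 3) then 1 else 0)
  else
    if c < 4*k then (if c % 4 = 3 then B (r - 3*k) (c/4) else 0)
    else B (r - 3*k) (c - 3*k)

/-! Every block of `A'` has entries in `{0,1}`. In row `3k + i`, the `1`s of `A'` in the column
block of `j < k` come from `encode(A_j)` and number at most `A i j` (a `2` becomes two `1`s, a
`1` a single one), so the row has at most `∑ⱼ A i j ≤ 3` ones. In column `4j + m` with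
`m < 3`, the identity block contributes one `1` and `encode(A_j)` at most two: the rank of a
`1` among the `1`s of its column is injective, and the column has at most one `2`. -/

lemma sum_range_mul_eq_sum_sum {M : Type*} [AddCommMonoid M] (f : ℕ → M) (n k : ℕ) :
    ∑ c ∈ range (n * k), f c = ∑ j ∈ range k, ∑ m ∈ range n, f (n * j + m) := by
  induction k with
  | zero => simp
  | succ k ih => rw [Nat.mul_succ, sum_range_add, ih, sum_range_succ _ k]

lemma card_filter_range_add (p : ℕ → Prop) [DecidablePred p] (a b : ℕ) :
    #{x ∈ range (a + b) | p x} = #{x ∈ range a | p x} + #{x ∈ range b | p (a + x)} := by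
  simp only [card_filter, sum_range_add]

lemma card_filter_or_le {α : Type*} (s : Finset α) (p q : α → Prop) [DecidablePred p]
    [DecidablePred q] : #{x ∈ s | p x ∨ q x} ≤ #{x ∈ s | p x} + #{x ∈ s | q x} := by
  rw [filter_or]
  exact card_union_le _ _

lemma card_filter_eq_one_le_sum {ι : Type*} (s : Finset ι) (f : ι → ℝ)
    (hf : ∀ x ∈ s, 0 ≤ f x) : (#{x ∈ s | f x = 1} : ℝ) ≤ ∑ x ∈ s, f x := by
  rw [natCast_card_filter]
  refine sum_le_sum fun x hx => ?_
  split_ifs with h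
  · exact h.ge
  · exact hf x hx

lemma sum_eq_two_mul_card_add_card {ι : Type*} (s : Finset ι) (f : ι → ℝ)
    (hf : ∀ x ∈ s, f x ∈ ({0, 1, 2} : Set ℝ)) :
    ∑ x ∈ s, f x = 2 * #{x ∈ s | f x = 2} + #{x ∈ s | f x = 1} := by
  rw [natCast_card_filter, natCast_card_filter, mul_sum, ← sum_add_distrib]
  refine sum_congr rfl fun x hx => ?_
  obtain h | h | h : f x = 0 ∨ f x = 1 ∨ f x = 2 := hf x hx
  all_goals norm_num [h]

namespace Stage3Row

variable {nc : ℕ} {row : ℕ → ℝ}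

lemma mem_zero_one_two (h : Stage3Row nc row) {j : ℕ} (hj : j < nc) :
    row j ∈ ({0, 1, 2} : Set ℝ) := by
  rcases h with ⟨h01, -⟩ | ⟨-, -, h012⟩
  · rcases h01 j hj with h | h <;> simp [h]
  · exact h012 j hj

lemma sum_le_three (h : Stage3Row nc row) : ∑ j ∈ range nc, row j ≤ 3 := by
  rw [sum_eq_two_mul_card_add_card _ _ fun j hj => h.mem_zero_one_two (mem_range.1 hj)]
  rcases h with ⟨h01, hones⟩ | ⟨htwos, hones, -⟩
  · have hno_two : #{j ∈ range nc | row j = 2} = 0 := by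
      refine card_eq_zero.2 (filter_eq_empty_iff.2 fun j hj h2 => ?_)
      rcases h01 j (mem_range.1 hj) with h | h <;> norm_num [h] at h2
    have hones' : (#{j ∈ range nc | row j = 1} : ℝ) ≤ 3 := by exact_mod_cast hones
    rw [hno_two]
    push_cast
    linarith
  · have hones' : (#{j ∈ range nc | row j = 1} : ℝ) ≤ 1 := by exact_mod_cast hones
    rw [htwos]
    push_cast
    linarith

end Stage3Row

lemma oneRank_eq_count (A : ℕ → ℕ → ℝ) (j r : ℕ) :
    oneRank A j r = Nat.count (fun i => A i j = 1) r :=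
  (Nat.count_eq_card_filter_range _ _).symm

lemma card_filter_oneRank_eq_le_one (A : ℕ → ℕ → ℝ) (j nr t : ℕ) :
    #{i ∈ range nr | A i j = 1 ∧ oneRank A j i = t} ≤ 1 := by
  refine card_le_one.2 fun a ha b hb => ?_
  simp only [mem_filter] at ha hb
  refine Nat.count_injective (p := fun i => A i j = 1) ha.2.1 hb.2.1 ?_
  rw [← oneRank_eq_count, ← oneRank_eq_count, ha.2.2, hb.2.2]

/-- Entry `(i, m)` of the block `(rb_e, cb₁ʲ ∪ cb₂ʲ)` of `A'`, that is, of `encode(A_j)`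
extended by a zero column `m = 3`. -/
noncomputable def encode (A : ℕ → ℕ → ℝ) (j i : ℕ) : ℕ → ℝ
  | 0 => if A i j = 1 ∧ oneRank A j i < 2 then 1 else 0
  | 1 => if A i j = 2 ∨ (A i j = 1 ∧ oneRank A j i = 2) then 1 else 0
  | 2 => if A i j = 2 ∨ (A i j = 1 ∧ oneRank A j i = 3) then 1 else 0
  | _ => 0

section Encode

variable (A : ℕ → ℕ → ℝ) (j : ℕ)

lemma encode_eq_zero_or_one (i m : ℕ) : encode A j i m = 0 ∨ encode A j i m = 1 := by
  unfold encode
  split <;> (try split_ifs) <;> simp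

lemma sum_encode_le {i : ℕ} (h : A i j ∈ ({0, 1, 2} : Set ℝ)) :
    ∑ m ∈ range 4, encode A j i m ≤ A i j := by
  obtain h | h | h : A i j = 0 ∨ A i j = 1 ∨ A i j = 2 := h
  · simp [sum_range_succ, encode, h]
  · norm_num [sum_range_succ, encode, h]
    split_ifs <;> norm_num <;> omega
  · norm_num [sum_range_succ, encode, h]

lemma card_filter_encode_le_two {nr m : ℕ} (htwo : #{i ∈ range nr | A i j = 2} ≤ 1)
    (hm : m < 3) : #{i ∈ range nr | encode A j i m = 1} ≤ 2 := by
  have hrank := card_filter_oneRank_eq_le_one A j nr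
  have hor := card_filter_or_le (range nr)
  interval_cases m
  · calc #{i ∈ range nr | encode A j i 0 = 1}
        = #{i ∈ range nr | (A i j = 1 ∧ oneRank A j i = 0) ∨ (A i j = 1 ∧ oneRank A j i = 1)} := by
          congr 1
          refine filter_congr fun i _ => ?_
          simp only [encode, ite_eq_left_iff, zero_ne_one, imp_false, not_not, ← and_or_left]
          exact and_congr_right fun _ => by omega
      _ ≤ 2 := (hor _ _).trans (add_le_add (hrank 0) (hrank 1))
  · calc #{i ∈ range nr | encode A j i 1 = 1}
        = #{i ∈ range nr | A i j = 2 ∨ (A i j = 1 ∧ oneRank A j i = 2)} := by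
          congr 1
          refine filter_congr fun i _ => ?_
          simp only [encode, ite_eq_left_iff, zero_ne_one, imp_false, not_not]
      _ ≤ 2 := (hor _ _).trans (add_le_add htwo (hrank 2))
  · calc #{i ∈ range nr | encode A j i 2 = 1}
        = #{i ∈ range nr | A i j = 2 ∨ (A i j = 1 ∧ oneRank A j i = 3)} := by
          congr 1
          refine filter_congr fun i _ => ?_
          simp only [encode, ite_eq_left_iff, zero_ne_one, imp_false, not_not]
      _ ≤ 2 := (hor _ _).trans (add_le_add htwo (hrank 3))

end Encode

section Scs2A

variable {k : ℕ} {A : ℕ → ℕ → ℝ}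

lemma scs2A_of_lt {r : ℕ} (hr : r < 3 * k) (c : ℕ) :
    scs2A k A r c = if c = 4 * (r / 3) + r % 3 ∨ c = 4 * (r / 3) + 3 then 1 else 0 := by
  simp only [scs2A, if_pos hr]

lemma scs2A_eq_one_iff_of_lt {r : ℕ} (hr : r < 3 * k) (c : ℕ) :
    scs2A k A r c = 1 ↔ r / 3 = c / 4 ∧ (r % 3 = c % 4 ∨ c % 4 = 3) := by
  rw [scs2A_of_lt hr, ite_eq_left_iff, not_imp_comm]
  simp only [zero_ne_one, not_false_eq_true, true_implies]
  omega

lemma scs2A_add_add {j m : ℕ} (hj : j < k) (hm : m < 4) (i : ℕ) :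
    scs2A k A (3 * k + i) (4 * j + m) = encode A j i m := by
  have hdiv : (4 * j + m) / 4 = j := by omega
  have hmod : (4 * j + m) % 4 = m := by omega
  simp only [scs2A, if_neg (by omega : ¬3 * k + i < 3 * k), if_pos (by omega : 4 * j + m < 4 * k),
    Nat.add_sub_cancel_left, hdiv, hmod]
  interval_cases m <;> rfl

lemma scs2A_add_add_of_le {j : ℕ} (hj : k ≤ j) (i : ℕ) :
    scs2A k A (3 * k + i) (3 * k + j) = A i j := by
  simp only [scs2A, if_neg (by omega : ¬3 * k + i < 3 * k), if_neg (by omega : ¬3 * k + j < 4 * k),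
    Nat.add_sub_cancel_left]

variable {nr nc : ℕ}

lemma scs2A_eq_zero_or_one (hrow : ∀ i < nr, Stage3Row nc fun j => A i j)
    (hno_two : ∀ j, k ≤ j → j < nc → ∀ i < nr, A i j ≠ 2)
    {r c : ℕ} (hr : r < 3 * k + nr) (hc : c < 3 * k + nc) :
    scs2A k A r c = 0 ∨ scs2A k A r c = 1 := by
  by_cases hrk : r < 3 * k
  · rw [scs2A_of_lt hrk]
    split_ifs <;> simp
  obtain ⟨i, rfl⟩ : ∃ i, r = 3 * k + i := ⟨r - 3 * k, by omega⟩
  by_cases hck : c < 4 * k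
  · obtain ⟨j, m, hm, rfl⟩ : ∃ j m, m < 4 ∧ c = 4 * j + m :=
      ⟨c / 4, c % 4, Nat.mod_lt _ (by norm_num), (Nat.div_add_mod c 4).symm⟩
    rw [scs2A_add_add (by omega) hm]
    exact encode_eq_zero_or_one A j i m
  obtain ⟨j, rfl⟩ : ∃ j, c = 3 * k + j := ⟨c - 3 * k, by omega⟩
  rw [scs2A_add_add_of_le (by omega)]
  obtain h | h | h : A i j = 0 ∨ A i j = 1 ∨ A i j = 2 :=
    (hrow i (by omega)).mem_zero_one_two (by omega)
  · exact .inl h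
  · exact .inr h
  · exact absurd h (hno_two j (by omega) (by omega) i (by omega))

lemma sum_scs2A_add_le (hk : k ≤ nc) {i : ℕ} (hA : ∀ j < nc, A i j ∈ ({0, 1, 2} : Set ℝ)) :
    ∑ c ∈ range (3 * k + nc), scs2A k A (3 * k + i) c ≤ ∑ j ∈ range nc, A i j := by
  obtain ⟨l, rfl⟩ := Nat.exists_eq_add_of_le hk
  calc ∑ c ∈ range (3 * k + (k + l)), scs2A k A (3 * k + i) c
      = ∑ j ∈ range k, ∑ m ∈ range 4, encode A j i m + ∑ j ∈ range l, A i (k + j) := by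
        rw [show 3 * k + (k + l) = 4 * k + l by ring, sum_range_add, sum_range_mul_eq_sum_sum]
        congr 1
        · exact sum_congr rfl fun j hj => sum_congr rfl fun m hm =>
            scs2A_add_add (mem_range.1 hj) (mem_range.1 hm) i
        · refine sum_congr rfl fun j _ => ?_
          rw [show 4 * k + j = 3 * k + (k + j) by ring, scs2A_add_add_of_le (by omega)]
    _ ≤ ∑ j ∈ range k, A i j + ∑ j ∈ range l, A i (k + j) := by
        gcongr with j hj
        exact sum_encode_le A j (hA j (by simp at hj; omega))
    _ = ∑ j ∈ range (k + l), A i j := (sum_range_add _ _ _).symm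

lemma card_row_scs2A_le_three (hk : k ≤ nc) (hrow : ∀ i < nr, Stage3Row nc fun j => A i j)
    (hno_two : ∀ j, k ≤ j → j < nc → ∀ i < nr, A i j ≠ 2) {r : ℕ} (hr : r < 3 * k + nr) :
    #{c ∈ range (3 * k + nc) | scs2A k A r c = 1} ≤ 3 := by
  by_cases hrk : r < 3 * k
  · calc #{c ∈ range (3 * k + nc) | scs2A k A r c = 1}
        ≤ #({4 * (r / 3) + r % 3, 4 * (r / 3) + 3} : Finset ℕ) := by
          refine card_le_card fun c hc => ?_
          rw [mem_filter, scs2A_of_lt hrk] at hc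
          split_ifs at hc with h
          · simpa using h
          · norm_num at hc
      _ ≤ 3 := card_le_two.trans (by norm_num)
  obtain ⟨i, rfl⟩ : ∃ i, r = 3 * k + i := ⟨r - 3 * k, by omega⟩
  have hi : i < nr := by omega
  have h01 (c) (hc : c ∈ range (3 * k + nc)) : 0 ≤ scs2A k A (3 * k + i) c := by
    rcases scs2A_eq_zero_or_one hrow hno_two hr (mem_range.1 hc) with h | h <;> simp [h]
  have hcard : (#{c ∈ range (3 * k + nc) | scs2A k A (3 * k + i) c = 1} : ℝ) ≤ 3 :=
    calc _ ≤ ∑ c ∈ range (3 * k + nc), scs2A k A (3 * k + i) c := card_filter_eq_one_le_sum _ _ h01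
      _ ≤ ∑ j ∈ range nc, A i j := sum_scs2A_add_le hk fun j => (hrow i hi).mem_zero_one_two
      _ ≤ 3 := (hrow i hi).sum_le_three
  exact_mod_cast hcard

lemma card_col_scs2A_top_le_three (c : ℕ) : #{r ∈ range (3 * k) | scs2A k A r c = 1} ≤ 3 :=
  calc #{r ∈ range (3 * k) | scs2A k A r c = 1} ≤ #(Ico (3 * (c / 4)) (3 * (c / 4) + 3)) := by
        refine card_le_card fun r hr => ?_
        rw [mem_filter, mem_range] at hr
        rw [scs2A_eq_one_iff_of_lt hr.1] at hr
        rw [mem_Ico]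
        omega
    _ = 3 := by simp

lemma card_col_scs2A_top_le_one {c : ℕ} (hc : c % 4 ≠ 3) :
    #{r ∈ range (3 * k) | scs2A k A r c = 1} ≤ 1 := by
  refine card_le_one.2 fun a ha b hb => ?_
  rw [mem_filter, mem_range] at ha hb
  rw [scs2A_eq_one_iff_of_lt ha.1] at ha
  rw [scs2A_eq_one_iff_of_lt hb.1] at hb
  omega

lemma col_scs2A_top_eq_empty {c : ℕ} (hc : 4 * k ≤ c) :
    {r ∈ range (3 * k) | scs2A k A r c = 1} = ∅ := by
  refine filter_eq_empty_iff.2 fun r hr h => ?_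
  rw [mem_range] at hr
  rw [scs2A_eq_one_iff_of_lt hr] at h
  omega

lemma card_col_scs2A_le_three (htwo : ∀ j < k, #{i ∈ range nr | A i j = 2} ≤ 1)
    (hones : ∀ j, k ≤ j → j < nc → #{i ∈ range nr | A i j = 1} ≤ 3)
    {c : ℕ} (hc : c < 3 * k + nc) :
    #{r ∈ range (3 * k + nr) | scs2A k A r c = 1} ≤ 3 := by
  rw [card_filter_range_add]
  by_cases hck : c < 4 * k
  · obtain ⟨j, m, hm, rfl⟩ : ∃ j m, m < 4 ∧ c = 4 * j + m :=
      ⟨c / 4, c % 4, Nat.mod_lt _ (by norm_num), (Nat.div_add_mod c 4).symm⟩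
    have hj : j < k := by omega
    simp only [scs2A_add_add hj hm]
    by_cases hm3 : m = 3
    · subst hm3
      simpa [encode] using card_col_scs2A_top_le_three (k := k) (A := A) (4 * j + 3)
    · have htop := card_col_scs2A_top_le_one (k := k) (A := A) (c := 4 * j + m) (by omega)
      have henc := card_filter_encode_le_two A j (htwo j hj) (by omega : m < 3)
      omega
  · obtain ⟨j, rfl⟩ : ∃ j, c = 3 * k + j := ⟨c - 3 * k, by omega⟩
    rw [col_scs2A_top_eq_empty (by omega), card_empty, zero_add]
    simp only [scs2A_add_add_of_le (by omega : k ≤ j)]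
    exact hones j (by omega) (by omega)

end Scs2A

/-- If `(A, B)` is a stage 3 game satisfying the input assumptions of the type-two
single column simulation, then every entry of `A'` lies in `{0,1}` and every row
and every column of `A'` contains at most three entries equal to `1`. -/
theorem stmt19 (n nr nc k : ℕ) (A B : ℕ → ℕ → ℝ)
    (hin : Scs2Input n nr nc k A B) :
    (∀ r < 3*k+nr, ∀ c < 3*k+nc, scs2A k A r c = 0 ∨ scs2A k A r c = 1) ∧
    (∀ r < 3*k+nr, ((range (3*k+nc)).filter fun c => scs2A k A r c = 1).card ≤ 3) ∧
    (∀ c < 3*k+nc, ((range (3*k+nr)).filter fun r => scs2A k A r c = 1).card ≤ 3) := by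
  obtain ⟨-, -, hk, ⟨hcol, hrow, -, -⟩, -, -, -, -, -, -, -, htail⟩ := hin
  have hno_two := fun j hkj hj => (htail j hkj hj).1
  refine ⟨fun r hr c hc => scs2A_eq_zero_or_one hrow hno_two hr hc,
    fun r hr => card_row_scs2A_le_three hk hrow hno_two hr,
    fun c hc => card_col_scs2A_le_three (fun j hj => (hcol j (by omega)).2.2)
      (fun j hkj hj => (htail j hkj hj).2) hc⟩
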